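/- The loss from restricting attention to quota mechanisms satisfies V* − V_Q = (1/2)·κ·Var[ω]/(1+κγβ), where V* = ∫ max_{x ∈ [0, min{κ,q}]} U(x, ω) dΛ(ω) and V_Q is the supremum over Q ∈ [0, min{κ,q}] of ∫ U(min{max{Q, κ(1−ω)}, min{κ,q}}, ω) dΛ(ω). -/

import Mathlib

open Set MeasureTheory

/-- Authority payoff. -/
noncomputable def U (q κ γ β x ω : ℝ) : ℝ :=
  q * ω + (1 + γ - ω) * x - (1/2) * (1/κ + γ*β) * x^2

/-- Mean of ω under Λ. -/
noncomputable def Emean (Λ : Measure ℝ) : ℝ := ∫ ω, ω ∂Λ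

/-- Variance of ω under Λ. -/
noncomputable def Vvar (Λ : Measure ℝ) : ℝ := ∫ ω, (ω - Emean Λ)^2 ∂Λ

/-- First-best value. -/
noncomputable def Vstar (q κ γ β : ℝ) (Λ : Measure ℝ) : ℝ :=
  ∫ ω, sSup ((fun x => U q κ γ β x ω) '' Set.Icc (0:ℝ) (min κ q)) ∂Λ

/-- Value of the quota-first policy Q. -/
noncomputable def UQ (q κ γ β : ℝ) (Λ : Measure ℝ) (Q : ℝ) : ℝ :=
  ∫ ω, U q κ γ β (min (max Q (κ*(1-ω))) (min κ q)) ω ∂Λ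

/-- Optimal quota value `V_Q = sup_{Q ∈ [0,min{κ,q}]} U_Q(Q)`. -/
noncomputable def VQ (q κ γ β : ℝ) (Λ : Measure ℝ) : ℝ :=
  sSup (UQ q κ γ β Λ '' Set.Icc (0:ℝ) (min κ q))

/-!
Write `A = 1/κ + γβ`, so that `U(x, ω) = qω + (1+γ-ω)x - A x²/2` is a concave parabola in `x`
with peak `(1+γ-ω)/A`, and affine in `ω`. The first regularity condition puts the peak inside
`[0, min{κ,q}]` for every `ω` in the support, so `V* = E[qω + (1+γ-ω)²/(2A)]`. The second one
makes the floor `κ(1-ω)` harmless: it never exceeds `κ(1-ω̲)`, which lies below every peak, so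
raising the allocation to `max{Q, κ(1-ω̲)}` in every state only helps. Hence the best quota is a
state-independent allocation, i.e. the peak `(1+γ-E[ω])/A` of `x ↦ U(x, E[ω])`, and
`V_Q = qE[ω] + (1+γ-E[ω])²/(2A)`. The gap is `Var[ω]/(2A) = κ Var[ω]/(2(1+κγβ))`.
-/

theorem Continuous.integrable_of_ae_mem_Icc {E : Type*} [NormedAddCommGroup E] {μ : Measure ℝ}
    [IsFiniteMeasure μ] {f : ℝ → E} {a b : ℝ} (hf : Continuous f)
    (hμ : ∀ᵐ x ∂μ, x ∈ Icc a b) : Integrable f μ := by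
  rw [← Measure.restrict_eq_self_of_ae_mem hμ]
  exact hf.integrableOn_Icc

section Moments

variable {Λ : Measure ℝ} [IsProbabilityMeasure Λ] {a b : ℝ}

theorem Emean_mem_Icc (hΛ : ∀ᵐ ω ∂Λ, ω ∈ Icc a b) : Emean Λ ∈ Icc a b := by
  have hid : Integrable (fun ω : ℝ => ω) Λ := continuous_id.integrable_of_ae_mem_Icc hΛ
  constructor
  · simpa [Emean] using integral_mono_ae (integrable_const a) hid (hΛ.mono fun _ h => h.1)
  · simpa [Emean] using integral_mono_ae hid (integrable_const b) (hΛ.mono fun _ h => h.2)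

theorem integral_affine (hΛ : ∀ᵐ ω ∂Λ, ω ∈ Icc a b) (s t : ℝ) :
    ∫ ω, (s * ω + t) ∂Λ = s * Emean Λ + t := by
  rw [integral_add ((by fun_prop : Continuous fun ω : ℝ => s * ω).integrable_of_ae_mem_Icc hΛ)
    (integrable_const t), integral_const_mul, integral_const]
  simp [Emean]

theorem integral_sub_sq (hΛ : ∀ᵐ ω ∂Λ, ω ∈ Icc a b) (c : ℝ) :
    ∫ ω, (c - ω) ^ 2 ∂Λ = (c - Emean Λ) ^ 2 + Vvar Λ := by
  have hsplit : ∀ ω, (c - ω) ^ 2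
      = (ω - Emean Λ) ^ 2 + (2 * (Emean Λ - c) * ω + (c ^ 2 - Emean Λ ^ 2)) := by
    intro ω; ring
  rw [funext hsplit,
    integral_add ((by fun_prop : Continuous fun ω : ℝ => (ω - Emean Λ) ^ 2)
      |>.integrable_of_ae_mem_Icc hΛ)
    ((by fun_prop : Continuous fun ω : ℝ => 2 * (Emean Λ - c) * ω + (c ^ 2 - Emean Λ ^ 2))
      |>.integrable_of_ae_mem_Icc hΛ),
    integral_affine hΛ, Vvar]
  ring

theorem integral_U (q κ γ β x : ℝ) (hΛ : ∀ᵐ ω ∂Λ, ω ∈ Icc a b) :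
    ∫ ω, U q κ γ β x ω ∂Λ = U q κ γ β x (Emean Λ) := by
  have haffine : ∀ ω, U q κ γ β x ω = (q - x) * ω + ((1 + γ) * x - 1/2 * (1/κ + γ*β) * x ^ 2) := by
    intro ω; unfold U; ring
  simp_rw [haffine, integral_affine hΛ]

end Moments

section Payoff

variable {q κ γ β : ℝ}

@[fun_prop]
theorem Continuous.U {f g : ℝ → ℝ} (hf : Continuous f) (hg : Continuous g) :
    Continuous fun ω => U q κ γ β (f ω) (g ω) := by
  unfold _root_.U; fun_prop

theorem U_le_U_peak (hA : 0 < 1/κ + γ*β) (x ω : ℝ) :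
    U q κ γ β x ω ≤ U q κ γ β ((1 + γ - ω) / (1/κ + γ*β)) ω := by
  have hgap : U q κ γ β ((1 + γ - ω) / (1/κ + γ*β)) ω - U q κ γ β x ω
      = (1 + γ - ω - (1/κ + γ*β) * x) ^ 2 / (2 * (1/κ + γ*β)) := by
    unfold U; field_simp; ring
  have : 0 ≤ (1 + γ - ω - (1/κ + γ*β) * x) ^ 2 / (2 * (1/κ + γ*β)) := by positivity
  linarith

theorem U_peak (hA : 1/κ + γ*β ≠ 0) (ω : ℝ) :
    U q κ γ β ((1 + γ - ω) / (1/κ + γ*β)) ω = q * ω + (1 + γ - ω) ^ 2 / (2 * (1/κ + γ*β)) := by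
  unfold U; field_simp; ring

theorem U_le_U_of_le (hA : 0 ≤ 1/κ + γ*β) {x y ω : ℝ} (hxy : x ≤ y)
    (hy : (1/κ + γ*β) * y ≤ 1 + γ - ω) : U q κ γ β x ω ≤ U q κ γ β y ω := by
  unfold U
  nlinarith [mul_nonneg (sub_nonneg.2 hxy) (sub_nonneg.2 hy),
    mul_nonneg hA (sq_nonneg (y - x))]

theorem sSup_image_U_Icc (hA : 0 < 1/κ + γ*β) {m ω : ℝ} (hω : ω ≤ 1 + γ)
    (hm : (1 + γ - ω) / (1/κ + γ*β) ≤ m) :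
    sSup ((fun x => U q κ γ β x ω) '' Icc 0 m)
      = q * ω + (1 + γ - ω) ^ 2 / (2 * (1/κ + γ*β)) := by
  rw [← U_peak hA.ne']
  refine IsGreatest.csSup_eq ⟨mem_image_of_mem _ ⟨?_, hm⟩, ?_⟩
  · exact div_nonneg (sub_nonneg.2 hω) hA.le
  · rintro _ ⟨x, -, rfl⟩
    exact U_le_U_peak hA x ω

theorem U_quota_le_U_max (hA : 0 ≤ 1/κ + γ*β) (hκ : 0 ≤ κ) {Q m ω ωl ωh : ℝ}
    (hω : ω ∈ Icc ωl ωh) (hQm : Q ≤ m) (hcm : κ * (1 - ωl) ≤ m)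
    (hcA : (1/κ + γ*β) * (κ * (1 - ωl)) ≤ 1 + γ - ωh) :
    U q κ γ β (min (max Q (κ * (1 - ω))) m) ω ≤ U q κ γ β (max Q (κ * (1 - ωl))) ω := by
  have hfloor : κ * (1 - ω) ≤ κ * (1 - ωl) := mul_le_mul_of_nonneg_left (by linarith [hω.1]) hκ
  rw [min_eq_left (max_le hQm (hfloor.trans hcm))]
  rcases le_total (κ * (1 - ωl)) Q with hcQ | hQc
  · rw [max_eq_left (hfloor.trans hcQ), max_eq_left hcQ]
  · rw [max_eq_right hQc]
    exact U_le_U_of_le hA (max_le hQc hfloor) (by linarith [hω.2])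

end Payoff

section Values

variable {q κ γ β ωl ωh : ℝ} {Λ : Measure ℝ} [IsProbabilityMeasure Λ]

theorem Vstar_eq (hA : 0 < 1/κ + γ*β) (hΛ : ∀ᵐ ω ∂Λ, ω ∈ Icc ωl ωh) (hωh : ωh ≤ 1 + γ)
    (hpeak : (1 + γ - ωl) / (1/κ + γ*β) ≤ min κ q) :
    Vstar q κ γ β Λ
      = q * Emean Λ + ((1 + γ - Emean Λ) ^ 2 + Vvar Λ) / (2 * (1/κ + γ*β)) := by
  have hpointwise : ∀ᵐ ω ∂Λ, sSup ((fun x => U q κ γ β x ω) '' Icc 0 (min κ q))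
      = q * ω + (1 + γ - ω) ^ 2 / (2 * (1/κ + γ*β)) := by
    filter_upwards [hΛ] with ω hω
    refine sSup_image_U_Icc hA (by linarith [hω.2]) (le_trans ?_ hpeak)
    exact div_le_div_of_nonneg_right (by linarith [hω.1]) hA.le
  rw [Vstar, integral_congr_ae hpointwise,
    integral_add ((by fun_prop : Continuous fun ω : ℝ => q * ω).integrable_of_ae_mem_Icc hΛ)
      ((by fun_prop : Continuous fun ω : ℝ => (1 + γ - ω) ^ 2 / (2 * (1/κ + γ*β)))
        |>.integrable_of_ae_mem_Icc hΛ),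
    integral_const_mul, integral_div, integral_sub_sq hΛ, Emean]

theorem VQ_eq (hA : 0 < 1/κ + γ*β) (hκ : 0 ≤ κ) (hΛ : ∀ᵐ ω ∂Λ, ω ∈ Icc ωl ωh)
    (hωh : ωh ≤ 1 + γ) (hcA : (1/κ + γ*β) * (κ * (1 - ωl)) ≤ 1 + γ - ωh)
    (hpeak : (1 + γ - Emean Λ) / (1/κ + γ*β) ≤ min κ q) :
    VQ q κ γ β Λ = q * Emean Λ + (1 + γ - Emean Λ) ^ 2 / (2 * (1/κ + γ*β)) := by
  set E := Emean Λ
  set Qs := (1 + γ - E) / (1/κ + γ*β)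
  have hEh : E ≤ ωh := (Emean_mem_Icc hΛ).2
  have hcQs : κ * (1 - ωl) ≤ Qs := by
    rw [le_div_iff₀' hA]; linarith
  have hUQ_le : ∀ Q ≤ min κ q, UQ q κ γ β Λ Q ≤ U q κ γ β (max Q (κ * (1 - ωl))) E := by
    intro Q hQ
    rw [UQ, ← integral_U q κ γ β _ hΛ]
    refine integral_mono_ae ?_ ((by fun_prop : Continuous fun ω => U q κ γ β _ ω)
      |>.integrable_of_ae_mem_Icc hΛ) ?_
    · exact (by fun_prop : Continuous fun ω =>
        U q κ γ β (min (max Q (κ * (1 - ω))) (min κ q)) ω).integrable_of_ae_mem_Icc hΛ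
    · filter_upwards [hΛ] with ω hω
      exact U_quota_le_U_max hA.le hκ hω hQ (hcQs.trans hpeak) hcA
  have hUQs : UQ q κ γ β Λ Qs = U q κ γ β Qs E := by
    rw [UQ, ← integral_U q κ γ β Qs hΛ]
    refine integral_congr_ae ?_
    filter_upwards [hΛ] with ω hω
    have hfloor : κ * (1 - ω) ≤ κ * (1 - ωl) := mul_le_mul_of_nonneg_left (by linarith [hω.1]) hκ
    rw [max_eq_left (hfloor.trans hcQs), min_eq_left hpeak]
  rw [VQ, ← U_peak hA.ne']
  refine IsGreatest.csSup_eq ⟨⟨Qs, ⟨div_nonneg (by linarith) hA.le, hpeak⟩, hUQs⟩, ?_⟩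
  rintro _ ⟨Q, hQ, rfl⟩
  exact (hUQ_le Q hQ.2).trans (U_le_U_peak hA _ E)

end Values

theorem stmt_6_general (q κ γ β ωl ωh : ℝ)
    (hκ : 0 < κ) (hγ : 0 ≤ γ) (hβ : 0 ≤ β)
    (hωlt : ωl < ωh) (hωh : ωh ≤ 1)
    (hreg1 : (1 + γ - ωl)/(1/κ + γ*β) + κ*(ωh - ωl) < min κ q)
    (hreg2 : κ*(1 - ωl) < (1 + γ - ωh)/(1/κ + γ*β))
    (Λ : Measure ℝ) [IsProbabilityMeasure Λ] (hsupp : Λ (Set.Icc ωl ωh)ᶜ = 0) :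
    Vstar q κ γ β Λ - VQ q κ γ β Λ = (1/2) * κ * Vvar Λ / (1 + κ*γ*β) := by
  have hA : 0 < 1/κ + γ*β := by positivity
  have hΛ : ∀ᵐ ω ∂Λ, ω ∈ Icc ωl ωh := ae_iff.2 hsupp
  have hωh' : ωh ≤ 1 + γ := by linarith
  have hpeak : (1 + γ - ωl) / (1/κ + γ*β) ≤ min κ q := by
    linarith [mul_pos hκ (sub_pos.2 hωlt)]
  have hpeakE : (1 + γ - Emean Λ) / (1/κ + γ*β) ≤ min κ q :=
    le_trans (div_le_div_of_nonneg_right (by linarith [(Emean_mem_Icc hΛ).1]) hA.le) hpeak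
  rw [Vstar_eq hA hΛ hωh' hpeak,
    VQ_eq hA hκ.le hΛ hωh' ((lt_div_iff₀' hA).1 hreg2).le hpeakE]
  field_simp
  ring

/-- The loss from restricting to quota mechanisms:
`V* − V_Q = (1/2)·κ·Var[ω]/(1+κγβ)`. -/
theorem stmt_6 (q κ γ β ωl ωh : ℝ)
    (hq0 : 0 < q) (hq1 : q ≤ 1) (hκ : 0 < κ) (hγ : 0 ≤ γ) (hβ : 0 ≤ β)
    (hωl : 0 ≤ ωl) (hωlt : ωl < ωh) (hωh : ωh ≤ 1)
    (hreg1 : (1 + γ - ωl)/(1/κ + γ*β) + κ*(ωh - ωl) < min κ q)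
    (hreg2 : κ*(1 - ωl) < (1 + γ - ωh)/(1/κ + γ*β))
    (Λ : Measure ℝ) [IsProbabilityMeasure Λ] (hsupp : Λ (Set.Icc ωl ωh)ᶜ = 0) :
    Vstar q κ γ β Λ - VQ q κ γ β Λ = (1/2) * κ * Vvar Λ / (1 + κ*γ*β) :=
  stmt_6_general q κ γ β ωl ωh hκ hγ hβ hωlt hωh hreg1 hreg2 Λ hsupp
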